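/- In a Garside monoid of spindle type, if Δ^q left-divides b for some q ≥ 0, then every word w over the atoms representing b decomposes as w ≡ u₁D₁u₂D₂⋯uₘDₘuₘ₊₁ where each Dᵢ is a word representing Δ^{qᵢ} and q₁+⋯+qₘ = q. -/

import Mathlib

/-- a left-divides b. -/
def LeftDvd {M : Type*} [Monoid M] (a b : M) : Prop := ∃ c : M, b = a * c

/-- a right-divides b. -/
def RightDvd' {M : Type*} [Monoid M] (a b : M) : Prop := ∃ c : M, b = c * a

/-- m is a right lcm of a and b. -/
def IsRightLcm {M : Type*} [Monoid M] (a b m : M) : Prop :=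
  LeftDvd a m ∧ LeftDvd b m ∧ ∀ x : M, LeftDvd a x → LeftDvd b x → LeftDvd m x

/-- m is a left lcm of a and b. -/
def IsLeftLcm {M : Type*} [Monoid M] (a b m : M) : Prop :=
  RightDvd' a m ∧ RightDvd' b m ∧ ∀ x : M, RightDvd' a x → RightDvd' b x → RightDvd' m x

/-- g is a left gcd of a and b. -/
def IsLeftGcd {M : Type*} [Monoid M] (a b g : M) : Prop :=
  LeftDvd g a ∧ LeftDvd g b ∧ ∀ x : M, LeftDvd x a → LeftDvd x b → LeftDvd x g

/-- g is a right gcd of a and b. -/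
def IsRightGcd {M : Type*} [Monoid M] (a b g : M) : Prop :=
  RightDvd' g a ∧ RightDvd' g b ∧ ∀ x : M, RightDvd' x a → RightDvd' x b → RightDvd' x g

/-- A monoid is Noetherian (atomic): the lengths of factorizations of any
    element into non-identity factors are bounded. -/
def NoetherianMonoid (M : Type*) [Monoid M] : Prop :=
  ∀ a : M, ∃ n : ℕ, ∀ l : List M, (∀ x ∈ l, x ≠ 1) → l.prod = a → l.length ≤ n

/-- A Garside monoid structure: a Noetherian cancellative monoid with right and
    left lcms, together with a balanced Garside element Δ whose (finite) set of
    divisors generates the monoid. -/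
structure GarsideMonoid (M : Type*) [Monoid M] where
  Δ : M
  noeth : NoetherianMonoid M
  cancel : ∀ a b b' c : M, a * b * c = a * b' * c → b = b'
  rlcm : ∀ a b : M, ∃ m : M, IsRightLcm a b m
  llcm : ∀ a b : M, ∃ m : M, IsLeftLcm a b m
  balanced : ∀ x : M, LeftDvd x Δ ↔ RightDvd' x Δ
  finS : {x : M | LeftDvd x Δ}.Finite
  genS : Submonoid.closure {x : M | LeftDvd x Δ} = ⊤

/-- The set of simple elements: divisors of the Garside element Δ. -/
def GarsideMonoid.S {M : Type*} [Monoid M] (gs : GarsideMonoid M) : Set M :=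
  {x : M | LeftDvd x gs.Δ}

/-- A Garside system is of spindle type if the left and right gcds of any
    two simple elements a, b lie in {a, b, 1}. -/
def GarsideMonoid.SpindleType {M : Type*} [Monoid M] (gs : GarsideMonoid M) : Prop :=
  (∀ a ∈ gs.S, ∀ b ∈ gs.S, ∀ g : M, IsLeftGcd a b g → g = a ∨ g = b ∨ g = 1) ∧
  (∀ a ∈ gs.S, ∀ b ∈ gs.S, ∀ g : M, IsRightGcd a b g → g = a ∨ g = b ∨ g = 1)

/-- x is an atom: non-identity and admitting no nontrivial factorization. -/
def IsAtomOf (M : Type*) [Monoid M] (x : M) : Prop :=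
  x ≠ 1 ∧ ∀ y z : M, x = y * z → y = 1 ∨ z = 1

/-!
A word over the atoms is read letter by letter while trying to close a block, starting at its
first letter `x`, that represents a power of `Δ`. What the block still lacks is kept as a left
normal form of an element not divisible by `Δ` (a stack), together with the number `j` of further
`Δ`'s that the rest of the word owes. In a Garside monoid of spindle type two nontrivial simple
elements are comparable or have right lcm `Δ`. Hence the next atom `y` either left-divides the
head of the stack, which is then shortened, or is coprime to it. In the coprime case one of the
owed `Δ`'s is pulled into the block (`y * complement y = Δ`, and moving this `Δ` through the
stack applies the Garside automorphism to it); if none is owed, the right lcm of `y` and the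
stack shows that the word without `x` is already divisible by the required power of `Δ`. Either
way we obtain a block `Δ ^ k` followed by a word divisible by `Δ ^ (q - k)`, or we may drop `x`;
induction on `q` finishes the proof.
-/

theorem IsRelPrime.map_mulEquiv {M N : Type*} [Monoid M] [Monoid N] (f : M ≃* N) {a b : M}
    (h : IsRelPrime a b) : IsRelPrime (f a) (f b) := by
  intro d hda hdb
  rw [← f.apply_symm_apply d] at hda hdb ⊢
  exact (h ((map_dvd_iff f).1 hda) ((map_dvd_iff f).1 hdb)).map f

namespace GarsideMonoid

variable {M : Type*} [Monoid M]

theorem mul_left_cancel (gs : GarsideMonoid M) {a b c : M} (h : a * b = a * c) : b = c :=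
  gs.cancel a b c 1 (by simpa using h)

theorem mul_right_cancel (gs : GarsideMonoid M) {a b c : M} (h : b * a = c * a) : b = c :=
  gs.cancel 1 b c a (by simpa using h)

theorem dvd_of_mul_dvd_mul_left (gs : GarsideMonoid M) {a b c : M} (h : a * b ∣ a * c) :
    b ∣ c := by
  obtain ⟨d, hd⟩ := h
  exact ⟨d, gs.mul_left_cancel (by rw [hd, mul_assoc])⟩

/-- Otherwise `[a, b, a, b, …]` would be arbitrarily long factorizations of `1`. -/
theorem eq_one_of_mul_eq_one (gs : GarsideMonoid M) {a b : M} (h : a * b = 1) : a = 1 := by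
  by_contra ha
  have hb : b ≠ 1 := by rintro rfl; exact ha (by simpa using h)
  obtain ⟨n, hn⟩ := gs.noeth 1
  have hmem : ∀ c ∈ (List.replicate (n + 1) [a, b]).flatten, c ≠ 1 := by
    intro c hc
    simp only [List.mem_flatten, List.mem_replicate] at hc
    obtain ⟨_, ⟨-, rfl⟩, hc⟩ := hc
    rcases List.mem_pair.1 hc with rfl | rfl
    exacts [ha, hb]
  have hlen : (n + 1) * 2 ≤ n := by
    simpa [List.length_flatten] using hn _ hmem (by simp [List.prod_flatten, h])
  omega

theorem isUnit_iff (gs : GarsideMonoid M) {a : M} : IsUnit a ↔ a = 1 :=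
  ⟨fun h => let ⟨_, hb⟩ := h.exists_right_inv; gs.eq_one_of_mul_eq_one hb,
    fun h => h ▸ isUnit_one⟩

theorem eq_one_of_dvd_one (gs : GarsideMonoid M) {a : M} (h : a ∣ 1) : a = 1 :=
  let ⟨_, hc⟩ := h; gs.eq_one_of_mul_eq_one hc.symm

theorem dvd_antisymm (gs : GarsideMonoid M) {a b : M} (hab : a ∣ b) (hba : b ∣ a) : a = b := by
  obtain ⟨c, rfl⟩ := hab
  obtain ⟨d, hd⟩ := hba
  have hcd : c * d = 1 := gs.mul_left_cancel (by rw [← mul_assoc, ← hd, mul_one])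
  rw [gs.eq_one_of_mul_eq_one hcd, mul_one]

variable (gs : GarsideMonoid M)

theorem induction_on {p : M → Prop} (simple : ∀ s, s ∣ gs.Δ → p s) (one : p 1)
    (mul : ∀ a b, p a → p b → p (a * b)) (a : M) : p a := by
  have ha : a ∈ Submonoid.closure {x : M | LeftDvd x gs.Δ} := gs.genS ▸ Submonoid.mem_top a
  induction ha using Submonoid.closure_induction with
  | mem s hs => exact simple s hs
  | one => exact one
  | mul a b _ _ ha hb => exact mul a b ha hb

theorem dvd_delta_of_isAtomOf {a : M} (ha : IsAtomOf M a) : a ∣ gs.Δ := by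
  induction a using gs.induction_on with
  | simple s hs => exact hs
  | one => exact absurd rfl ha.1
  | mul a b iha ihb =>
    rcases ha.2 a b rfl with rfl | rfl
    · rw [one_mul] at ha ⊢; exact ihb ha
    · rw [mul_one] at ha ⊢; exact iha ha

open scoped Classical in
noncomputable def complement (a : M) : M :=
  if h : a ∣ gs.Δ then h.choose else 1

theorem mul_complement {a : M} (h : a ∣ gs.Δ) : a * gs.complement a = gs.Δ := by
  rw [complement, dif_pos h]; exact h.choose_spec.symm

theorem complement_eq_of_mul_eq {a c : M} (h : a * c = gs.Δ) : gs.complement a = c :=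
  gs.mul_left_cancel (by rw [gs.mul_complement ⟨c, h.symm⟩, h])

theorem complement_dvd_delta {a : M} (h : a ∣ gs.Δ) : gs.complement a ∣ gs.Δ :=
  (gs.balanced _).2 ⟨a, (gs.mul_complement h).symm⟩

theorem complement_eq_one_iff {a : M} (h : a ∣ gs.Δ) : gs.complement a = 1 ↔ a = gs.Δ := by
  refine ⟨fun h1 => by simpa [h1] using gs.mul_complement h, ?_⟩
  rintro rfl
  exact gs.complement_eq_of_mul_eq (mul_one _)

theorem complement_eq_delta_iff {a : M} (h : a ∣ gs.Δ) : gs.complement a = gs.Δ ↔ a = 1 := by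
  refine ⟨fun h1 => ?_, ?_⟩
  · have h2 := gs.mul_complement h
    rw [h1] at h2
    exact gs.mul_right_cancel (h2.trans (one_mul _).symm)
  · rintro rfl
    exact gs.complement_eq_of_mul_eq (one_mul _)

theorem mul_complement_mul {a b : M} (h : a * b ∣ gs.Δ) :
    b * gs.complement (a * b) = gs.complement a :=
  (gs.complement_eq_of_mul_eq (by rw [← mul_assoc, gs.mul_complement h])).symm

theorem dvd_delta_of_mul_dvd_delta {a b : M} (h : a * b ∣ gs.Δ) : b ∣ gs.Δ :=
  (Dvd.intro _ (gs.mul_complement_mul h)).trans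
    (gs.complement_dvd_delta ((dvd_mul_right a b).trans h))

theorem complement_mul_dvd_complement {a b : M} (h : a * b ∣ gs.Δ) :
    gs.complement (a * b) ∣ gs.complement b := by
  obtain ⟨z, hz⟩ := gs.complement_dvd_delta ((dvd_mul_right a b).trans h)
  exact ⟨z, gs.complement_eq_of_mul_eq (by rw [← mul_assoc, gs.mul_complement_mul h, hz])⟩

theorem exists_mul_delta_eq (a : M) : ∃ c, a * gs.Δ = gs.Δ * c := by
  induction a using gs.induction_on with
  | simple s hs =>
    refine ⟨gs.complement (gs.complement s), ?_⟩
    calc s * gs.Δ = s * (gs.complement s * gs.complement (gs.complement s)) := by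
          rw [gs.mul_complement (gs.complement_dvd_delta hs)]
      _ = gs.Δ * gs.complement (gs.complement s) := by rw [← mul_assoc, gs.mul_complement hs]
  | one => exact ⟨1, by simp⟩
  | mul a b iha ihb =>
    obtain ⟨c, hc⟩ := iha
    obtain ⟨d, hd⟩ := ihb
    exact ⟨c * d, by rw [mul_assoc, hd, ← mul_assoc, hc, mul_assoc]⟩

theorem exists_delta_mul_eq (a : M) : ∃ c, gs.Δ * a = c * gs.Δ := by
  induction a using gs.induction_on with
  | simple s hs =>
    obtain ⟨e, he⟩ := (gs.balanced s).1 hs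
    obtain ⟨c, hc⟩ := (gs.balanced e).1 ⟨s, he⟩
    exact ⟨c, by conv_lhs => rw [hc]
                 rw [mul_assoc, ← he]⟩
  | one => exact ⟨1, by simp⟩
  | mul a b iha ihb =>
    obtain ⟨c, hc⟩ := iha
    obtain ⟨d, hd⟩ := ihb
    exact ⟨c * d, by rw [← mul_assoc, hc, mul_assoc, hd, ← mul_assoc]⟩

/-- The Garside automorphism `φ`, determined by `a * Δ = Δ * φ a`. -/
noncomputable def garsideAut : M ≃* M := by
  choose f hf using gs.exists_mul_delta_eq
  refine MulEquiv.mk' (Equiv.ofBijective f ⟨?_, fun c => ?_⟩) fun a b => ?_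
  · intro a b hab
    exact gs.mul_right_cancel (by rw [hf, hf, hab])
  · obtain ⟨a, ha⟩ := gs.exists_delta_mul_eq c
    exact ⟨a, gs.mul_left_cancel (by rw [← hf, ha])⟩
  · show f (a * b) = f a * f b
    exact gs.mul_left_cancel (a := gs.Δ) (by rw [← hf, mul_assoc, hf, ← mul_assoc, hf, mul_assoc])

theorem mul_delta (a : M) : a * gs.Δ = gs.Δ * gs.garsideAut a :=
  (gs.exists_mul_delta_eq a).choose_spec

theorem garsideAut_delta : gs.garsideAut gs.Δ = gs.Δ :=
  (gs.mul_left_cancel (gs.mul_delta gs.Δ)).symm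

theorem complement_complement {s : M} (hs : s ∣ gs.Δ) :
    gs.complement (gs.complement s) = gs.garsideAut s := by
  refine gs.mul_left_cancel (a := gs.Δ) ?_
  rw [← gs.mul_delta, ← gs.mul_complement hs, mul_assoc,
    gs.mul_complement (gs.complement_dvd_delta hs), gs.mul_complement hs]

theorem complement_garsideAut {s : M} (hs : s ∣ gs.Δ) :
    gs.complement (gs.garsideAut s) = gs.garsideAut (gs.complement s) :=
  gs.complement_eq_of_mul_eq (by rw [← map_mul, gs.mul_complement hs, gs.garsideAut_delta])

theorem garsideAut_dvd_delta_iff {a : M} : gs.garsideAut a ∣ gs.Δ ↔ a ∣ gs.Δ := by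
  conv_lhs => rw [← gs.garsideAut_delta]
  exact map_dvd_iff _

theorem delta_dvd_mul_of_dvd {a b : M} (h : gs.Δ ∣ b) : gs.Δ ∣ a * b := by
  obtain ⟨c, rfl⟩ := h
  exact ⟨gs.garsideAut a * c, by rw [← mul_assoc, gs.mul_delta, mul_assoc]⟩

theorem mul_delta_dvd_mul_delta {d a : M} (h : d ∣ a) : d * gs.Δ ∣ a * gs.Δ := by
  obtain ⟨c, rfl⟩ := h
  exact ⟨gs.garsideAut c, by rw [mul_assoc, gs.mul_delta, mul_assoc]⟩

/-- Obtained from the left lcm of the complements. -/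
theorem exists_isLeftGcd {a b : M} (ha : a ∣ gs.Δ) (hb : b ∣ gs.Δ) : ∃ g, IsLeftGcd a b g := by
  obtain ⟨l, ⟨ea, hea⟩, ⟨eb, heb⟩, hl⟩ := gs.llcm (gs.complement a) (gs.complement b)
  obtain ⟨g, hg⟩ := hl gs.Δ ⟨a, (gs.mul_complement ha).symm⟩ ⟨b, (gs.mul_complement hb).symm⟩
  refine ⟨g, ⟨ea, gs.mul_right_cancel (a := gs.complement a) ?_⟩,
    ⟨eb, gs.mul_right_cancel (a := gs.complement b) ?_⟩, fun d ⟨a', hda⟩ ⟨b', hdb⟩ => ?_⟩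
  · rw [gs.mul_complement ha, hg, hea, mul_assoc]
  · rw [gs.mul_complement hb, hg, heb, mul_assoc]
  · subst hda hdb
    have hd : d ∣ gs.Δ := (dvd_mul_right d a').trans ha
    obtain ⟨e, he⟩ := hl (gs.complement d) ⟨a', (gs.mul_complement_mul ha).symm⟩
      ⟨b', (gs.mul_complement_mul hb).symm⟩
    exact ⟨e, gs.mul_right_cancel (a := l) (by rw [← hg, mul_assoc, ← he, gs.mul_complement hd])⟩

theorem isRightGcd_complement {y r m : M} (hy : y ∣ gs.Δ) (hr : r ∣ gs.Δ)
    (hm : IsRightLcm y r m) :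
    IsRightGcd (gs.complement y) (gs.complement r) (gs.complement m) := by
  obtain ⟨⟨a, rfl⟩, ⟨b, hb⟩, hm⟩ := hm
  have hmΔ : y * a ∣ gs.Δ := hm gs.Δ hy hr
  refine ⟨⟨a, (gs.mul_complement_mul hmΔ).symm⟩, ⟨b, ?_⟩, fun d ⟨e, he⟩ ⟨f, hf⟩ => ?_⟩
  · rw [hb] at hmΔ ⊢
    exact (gs.mul_complement_mul hmΔ).symm
  · have hef : y * e = r * f :=
      gs.mul_right_cancel (a := d) (by rw [mul_assoc, mul_assoc, ← he, ← hf,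
        gs.mul_complement hy, gs.mul_complement hr])
    obtain ⟨g, hg⟩ := hm (y * e) (dvd_mul_right y e) (hef ▸ dvd_mul_right r f)
    exact ⟨g, gs.complement_eq_of_mul_eq (by rw [← mul_assoc, ← hg, mul_assoc, ← he,
      gs.mul_complement hy])⟩

theorem dvd_of_delta_dvd_complement_mul {y P : M} (hy : y ∣ gs.Δ)
    (h : gs.Δ ∣ gs.complement y * gs.garsideAut P) : y ∣ P := by
  obtain ⟨d, hd⟩ := h
  refine (map_dvd_iff gs.garsideAut).1 ⟨d, gs.mul_left_cancel (a := gs.Δ) ?_⟩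
  calc gs.Δ * gs.garsideAut P = y * (gs.complement y * gs.garsideAut P) := by
        rw [← mul_assoc, gs.mul_complement hy]
    _ = gs.Δ * (gs.garsideAut y * d) := by rw [hd, ← mul_assoc, gs.mul_delta, mul_assoc]

/-- The left normal form of an element of infimum `0`. -/
structure IsStack (S : List M) : Prop where
  dvd_delta : ∀ a ∈ S, a ∣ gs.Δ
  ne_one : ∀ a ∈ S, a ≠ 1
  isChain : S.IsChain fun a b => IsRelPrime (gs.complement a) b
  not_delta_dvd : ¬ gs.Δ ∣ S.prod

/-- State after reading `x` and then a word with product `m`, while trying to complete `x m` to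
`Δ ^ (i + 1)`: the stack `r :: L` is what is still missing, and the unread word `v` must still
supply it followed by `Δ ^ j`. The field `dvd_close` is what allows dropping `x` when the word
does not continue the stack. -/
structure BlockState (x m r : M) (L : List M) (i j : ℕ) (v : List M) : Prop where
  stack : gs.IsStack (r :: L)
  prod_eq : x * m * (r :: L).prod = gs.Δ ^ (i + 1)
  dvd_word : (r :: L).prod * gs.Δ ^ j ∣ v.prod
  dvd_close : gs.Δ ^ (i + 1) ∣
    m * (r :: L).prod * gs.complement ((r :: L).getLast (List.cons_ne_nil r L))

def BlockOutcome (x m : M) (n : ℕ) (v : List M) : Prop :=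
  (∃ w rest k l, v = w ++ rest ∧ x * m * w.prod = gs.Δ ^ (k + 1) ∧ gs.Δ ^ l ∣ rest.prod ∧
    k + l = n) ∨ gs.Δ ^ (n + 1) ∣ m * v.prod

variable {gs}

theorem SpindleType.dvd_or_dvd_or_isRelPrime (hsp : gs.SpindleType) {a b : M}
    (ha : a ∣ gs.Δ) (hb : b ∣ gs.Δ) : a ∣ b ∨ b ∣ a ∨ IsRelPrime a b := by
  obtain ⟨g, hg⟩ := gs.exists_isLeftGcd ha hb
  rcases hsp.1 a ha b hb g hg with rfl | rfl | rfl
  · exact .inl hg.2.1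
  · exact .inr (.inl hg.1)
  · exact .inr (.inr fun d hda hdb => (gs.isUnit_iff).2 (gs.eq_one_of_dvd_one (hg.2.2 d hda hdb)))

theorem SpindleType.dvd_or_isRelPrime_of_isAtomOf (hsp : gs.SpindleType) {y r : M}
    (hy : IsAtomOf M y) (hr : r ∣ gs.Δ) : y ∣ r ∨ IsRelPrime y r := by
  rcases hsp.dvd_or_dvd_or_isRelPrime (gs.dvd_delta_of_isAtomOf hy) hr with h | ⟨c, hc⟩ | h
  · exact .inl h
  · rcases hy.2 r c hc with rfl | rfl
    · exact .inr fun d _ hd => gs.isUnit_iff.2 (gs.eq_one_of_dvd_one hd)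
    · exact .inl ⟨1, by simp [hc]⟩
  · exact .inr h

/-- Through `isRightGcd_complement`, the right-gcd half of the spindle condition says that the
right lcm of two simple elements is one of them or `Δ`. -/
theorem SpindleType.delta_dvd_of_isRelPrime (hsp : gs.SpindleType) {y r m : M}
    (hy : y ∣ gs.Δ) (hr : r ∣ gs.Δ) (hy1 : y ≠ 1) (hr1 : r ≠ 1) (hyr : IsRelPrime y r)
    (hym : y ∣ m) (hrm : r ∣ m) : gs.Δ ∣ m := by
  obtain ⟨l, hl⟩ := gs.rlcm y r
  have hlΔ : l ∣ gs.Δ := hl.2.2 _ hy hr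
  have complement_inj {a : M} (ha : a ∣ gs.Δ) (h : gs.complement l = gs.complement a) : l = a :=
    gs.mul_right_cancel (by rw [gs.mul_complement hlΔ, h, gs.mul_complement ha])
  rcases hsp.2 _ (gs.complement_dvd_delta hy) _ (gs.complement_dvd_delta hr) _
    (gs.isRightGcd_complement hy hr hl) with h | h | h
  · exact absurd (gs.isUnit_iff.1 (hyr (complement_inj hy h ▸ hl.2.1) dvd_rfl)) hr1
  · exact absurd (gs.isUnit_iff.1 (hyr dvd_rfl (complement_inj hr h ▸ hl.1))) hy1
  · exact (gs.complement_eq_one_iff hlΔ).1 h ▸ hl.2.2 m hym hrm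

namespace IsStack

theorem tail {r : M} {L : List M} (h : gs.IsStack (r :: L)) : gs.IsStack L where
  dvd_delta a ha := h.dvd_delta a (List.mem_cons_of_mem r ha)
  ne_one a ha := h.ne_one a (List.mem_cons_of_mem r ha)
  isChain := h.isChain.tail
  not_delta_dvd hL := h.not_delta_dvd (by rw [List.prod_cons]; exact gs.delta_dvd_mul_of_dvd hL)

theorem head_ne_delta {r : M} {L : List M} (h : gs.IsStack (r :: L)) : r ≠ gs.Δ := by
  rintro rfl
  exact h.not_delta_dvd (by rw [List.prod_cons]; exact dvd_mul_right _ _)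

theorem mul_complement_getLast_dvd (hsp : gs.SpindleType) {L : List M} :
    ∀ {r s m : M}, gs.IsStack (r :: L) → s ∣ gs.Δ → s ≠ 1 → IsRelPrime s r → s ∣ m →
      (r :: L).prod ∣ m →
      (r :: L).prod * gs.complement ((r :: L).getLast (List.cons_ne_nil r L)) ∣ m := by
  induction L with
  | nil =>
    intro r s m h hs hs1 hsr hsm hrm
    have hr := h.dvd_delta r List.mem_cons_self
    have hΔ := hsp.delta_dvd_of_isRelPrime hs hr hs1 (h.ne_one r List.mem_cons_self) hsr hsm
      (by simpa using hrm)
    simpa [gs.mul_complement hr] using hΔ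
  | cons r₂ L₂ ih =>
    intro r s m h hs hs1 hsr hsm hrm
    have hr := h.dvd_delta r List.mem_cons_self
    rw [List.prod_cons] at hrm
    obtain ⟨z, hz⟩ := hsp.delta_dvd_of_isRelPrime hs hr hs1 (h.ne_one r List.mem_cons_self) hsr
      hsm ((dvd_mul_right r _).trans hrm)
    have hm : m = r * (gs.complement r * z) := by rw [← mul_assoc, gs.mul_complement hr, hz]
    have htail := ih h.tail (gs.complement_dvd_delta hr)
      ((gs.complement_eq_one_iff hr).not.2 h.head_ne_delta)
      (List.isChain_cons_cons.1 h.isChain).1 (dvd_mul_right _ _)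
      (gs.dvd_of_mul_dvd_mul_left (by rwa [← hm]))
    rw [List.getLast_cons_cons, List.prod_cons, mul_assoc, hm]
    exact mul_dvd_mul_left r htail

theorem cons_of_mul (hsp : gs.SpindleType) {a c : M} {L : List M} (h : gs.IsStack (a * c :: L))
    (hc : c ≠ 1) : gs.IsStack (c :: L) := by
  have hac := h.dvd_delta _ List.mem_cons_self
  have hcΔ := gs.dvd_delta_of_mul_dvd_delta hac
  have hnot : ¬ gs.Δ ∣ (c :: L).prod := fun hd =>
    h.not_delta_dvd (by rw [List.prod_cons, mul_assoc, ← List.prod_cons]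
                        exact gs.delta_dvd_mul_of_dvd hd)
  refine ⟨List.forall_mem_cons.2 ⟨hcΔ, fun b hb => h.dvd_delta b (List.mem_cons_of_mem _ hb)⟩,
    List.forall_mem_cons.2 ⟨hc, fun b hb => h.ne_one b (List.mem_cons_of_mem _ hb)⟩, ?_, hnot⟩
  cases L with
  | nil => exact List.IsChain.singleton c
  | cons r₂ L₂ =>
    obtain ⟨hrel, hchain⟩ := List.isChain_cons_cons.1 h.isChain
    refine List.isChain_cons_cons.2 ⟨?_, hchain⟩
    have hr₂ := h.dvd_delta r₂ (by simp)
    rcases hsp.dvd_or_dvd_or_isRelPrime (gs.complement_dvd_delta hcΔ) hr₂ with ⟨e, he⟩ | hdvd | h'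
    · refine absurd ⟨e * L₂.prod, ?_⟩ hnot
      rw [List.prod_cons, List.prod_cons, he, ← mul_assoc, ← mul_assoc, gs.mul_complement hcΔ,
        mul_assoc]
    · -- `complement (a * c)` and `r₂` are coprime and both divide `complement c`, forcing `c = 1`
      have hΔ := hsp.delta_dvd_of_isRelPrime (gs.complement_dvd_delta hac) hr₂
        ((gs.complement_eq_one_iff hac).not.2 h.head_ne_delta) (h.ne_one r₂ (by simp)) hrel
        (gs.complement_mul_dvd_complement hac) hdvd
      exact absurd ((gs.complement_eq_delta_iff hcΔ).1
        (gs.dvd_antisymm (gs.complement_dvd_delta hcΔ) hΔ)) hc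
    · exact h'

/-- Reading a letter `y` coprime to the head: `y` is absorbed into `y * complement y = Δ`, and this
`Δ` is moved to the right through the stack, which applies `φ` to it. -/
theorem push (hsp : gs.SpindleType) {y r : M} {L : List M} (h : gs.IsStack (r :: L))
    (hy : y ∣ gs.Δ) (hy1 : y ≠ 1) (hyr : IsRelPrime y r) :
    gs.IsStack (gs.complement y :: (r :: L).map gs.garsideAut) := by
  have hr := h.dvd_delta r List.mem_cons_self
  have hr1 := h.ne_one r List.mem_cons_self
  have hyΔ : y ≠ gs.Δ := by
    rintro rfl
    exact hr1 (gs.isUnit_iff.1 (hyr hr dvd_rfl))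
  refine ⟨?_, ?_, ?_, ?_⟩
  · rw [List.forall_mem_cons, List.forall_mem_map]
    exact ⟨gs.complement_dvd_delta hy, fun a ha => gs.garsideAut_dvd_delta_iff.2 (h.dvd_delta a ha)⟩
  · rw [List.forall_mem_cons, List.forall_mem_map]
    exact ⟨(gs.complement_eq_one_iff hy).not.2 hyΔ,
      fun a ha => (MulEquiv.map_ne_one_iff _).2 (h.ne_one a ha)⟩
  · rw [List.map_cons, List.isChain_cons_cons, gs.complement_complement hy, ← List.map_cons,
      List.isChain_map]
    refine ⟨hyr.map_mulEquiv _, h.isChain.imp_of_mem_imp fun a b ha _ hab => ?_⟩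
    rw [gs.complement_garsideAut (h.dvd_delta a ha)]
    exact hab.map_mulEquiv _
  · rw [List.prod_cons, ← map_list_prod]
    intro hΔ
    refine h.not_delta_dvd (hsp.delta_dvd_of_isRelPrime hy hr hy1 hr1 hyr
      (gs.dvd_of_delta_dvd_complement_mul hy hΔ) ?_)
    rw [List.prod_cons]
    exact dvd_mul_right _ _

end IsStack

theorem BlockOutcome.cons {x m y : M} {n : ℕ} {v : List M} (h : gs.BlockOutcome x (m * y) n v) :
    gs.BlockOutcome x m n (y :: v) := by
  rcases h with ⟨w, rest, k, l, rfl, hw, hl, hkl⟩ | h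
  · exact .inl ⟨y :: w, rest, k, l, rfl, by simpa [mul_assoc] using hw, hl, hkl⟩
  · exact .inr (by simpa [mul_assoc] using h)

namespace BlockState

variable {x m r : M} {L : List M} {i j : ℕ}

theorem not_nil (hs : gs.BlockState x m r L i j []) : False := by
  obtain ⟨c, hc⟩ := hs.dvd_word
  rw [List.prod_nil, mul_assoc, List.prod_cons, mul_assoc] at hc
  exact hs.stack.ne_one r List.mem_cons_self (gs.eq_one_of_mul_eq_one hc.symm)

theorem pop_head {y r₂ : M} {v : List M} (hs : gs.BlockState x m y (r₂ :: L) i j (y :: v)) :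
    gs.BlockState x (m * y) r₂ L i j v where
  stack := hs.stack.tail
  prod_eq := by simpa [mul_assoc] using hs.prod_eq
  dvd_word := gs.dvd_of_mul_dvd_mul_left (by simpa [mul_assoc] using hs.dvd_word)
  dvd_close := by simpa [mul_assoc] using hs.dvd_close

theorem pop (hsp : gs.SpindleType) {y c : M} {v : List M}
    (hs : gs.BlockState x m (y * c) L i j (y :: v)) (hc : c ≠ 1) :
    gs.BlockState x (m * y) c L i j v where
  stack := hs.stack.cons_of_mul hsp hc
  prod_eq := by simpa [mul_assoc] using hs.prod_eq
  dvd_word := gs.dvd_of_mul_dvd_mul_left (by simpa [mul_assoc] using hs.dvd_word)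
  dvd_close := by
    cases L with
    | nil =>
      have hyc := hs.stack.dvd_delta _ List.mem_cons_self
      have h := hs.dvd_close
      simp only [List.prod_cons, List.prod_nil, mul_one, List.getLast_singleton] at h ⊢
      exact h.trans (by
        rw [← mul_assoc]
        exact mul_dvd_mul_left _ (gs.complement_mul_dvd_complement hyc))
    | cons r₂ L₂ => simpa [mul_assoc] using hs.dvd_close

theorem push (hsp : gs.SpindleType) {y : M} {v : List M}
    (hs : gs.BlockState x m r L i (j + 1) (y :: v)) (hy : y ∣ gs.Δ) (hy1 : y ≠ 1)
    (hyr : IsRelPrime y r) :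
    gs.BlockState x (m * y) (gs.complement y) ((r :: L).map gs.garsideAut) (i + 1) j v := by
  have key : y * (gs.complement y :: (r :: L).map gs.garsideAut).prod =
      (r :: L).prod * gs.Δ := by
    rw [List.prod_cons, ← map_list_prod, ← mul_assoc, gs.mul_complement hy, gs.mul_delta]
  have hlast := hs.stack.dvd_delta _ (List.getLast_mem (List.cons_ne_nil r L))
  refine ⟨hs.stack.push hsp hy hy1 hyr, ?_, gs.dvd_of_mul_dvd_mul_left (a := y) ?_, ?_⟩
  · rw [mul_assoc x, mul_assoc m, key, ← mul_assoc, ← mul_assoc, hs.prod_eq, ← pow_succ]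
  · rw [← mul_assoc, key, mul_assoc, ← pow_succ', ← List.prod_cons]
    exact hs.dvd_word
  · rw [List.getLast_cons (by simp), List.getLast_map, gs.complement_garsideAut hlast,
      mul_assoc m, key, mul_assoc, mul_assoc, ← gs.mul_delta, ← mul_assoc, ← mul_assoc, pow_succ]
    exact gs.mul_delta_dvd_mul_delta hs.dvd_close

theorem delta_pow_dvd_of_isRelPrime (hsp : gs.SpindleType) {y : M} {v : List M}
    (hs : gs.BlockState x m r L i 0 (y :: v)) (hy : y ∣ gs.Δ) (hy1 : y ≠ 1)
    (hyr : IsRelPrime y r) : gs.Δ ^ (i + 1) ∣ m * (y :: v).prod := by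
  -- the stack times the complement of its last factor is the right lcm of the stack and `y`
  have hlcm := hs.stack.mul_complement_getLast_dvd hsp (m := (y :: v).prod) hy hy1 hyr
    (by rw [List.prod_cons]; exact dvd_mul_right _ _) (by simpa using hs.dvd_word)
  exact hs.dvd_close.trans (by rw [mul_assoc]; exact mul_dvd_mul_left m hlcm)

theorem blockOutcome (hsp : gs.SpindleType) {v : List M} :
    ∀ {m r : M} {L : List M} {i j : ℕ}, gs.BlockState x m r L i j v →
      (∀ a ∈ v, IsAtomOf M a) → gs.BlockOutcome x m (i + j) v := by
  induction v with
  | nil => exact fun hs _ => hs.not_nil.elim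
  | cons y v ih =>
    intro m r L i j hs hv
    have hy := hv y List.mem_cons_self
    have hv' a (ha : a ∈ v) := hv a (List.mem_cons_of_mem y ha)
    have hyΔ := gs.dvd_delta_of_isAtomOf hy
    rcases hsp.dvd_or_isRelPrime_of_isAtomOf hy (hs.stack.dvd_delta r List.mem_cons_self) with
      ⟨c, rfl⟩ | hyr
    · by_cases hc : c = 1
      · subst hc
        rw [mul_one] at hs
        cases L with
        | nil =>
          refine .inl ⟨[y], v, i, j, rfl, by simpa using hs.prod_eq, ?_, rfl⟩
          exact gs.dvd_of_mul_dvd_mul_left (by simpa using hs.dvd_word)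
        | cons r₂ L₂ => exact (ih hs.pop_head hv').cons
      · exact (ih (hs.pop hsp hc) hv').cons
    · cases j with
      | zero => exact .inr (hs.delta_pow_dvd_of_isRelPrime hsp hyΔ hy.1 hyr)
      | succ j =>
        rw [← add_assoc, add_right_comm]
        exact (ih (hs.push hsp hyΔ hy.1 hyr) hv').cons

end BlockState

theorem SpindleType.exists_delta_pow_block (hsp : gs.SpindleType) {l : List M}
    (hl : ∀ a ∈ l, IsAtomOf M a) {q : ℕ} (hq : gs.Δ ^ (q + 1) ∣ l.prod) :
    ∃ u D r k n, l = u ++ D ++ r ∧ D.prod = gs.Δ ^ (k + 1) ∧ gs.Δ ^ n ∣ r.prod ∧ k + n = q := by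
  induction l with
  | nil => exact ⟨[], [], [], q, 0, rfl, by simpa using (gs.eq_one_of_dvd_one hq).symm,
      by simp, rfl⟩
  | cons x v ih =>
    have hx := hl x List.mem_cons_self
    have hv a (ha : a ∈ v) := hl a (List.mem_cons_of_mem x ha)
    have hxΔ := gs.dvd_delta_of_isAtomOf hx
    rw [List.prod_cons, pow_succ'] at hq
    by_cases hxeq : x = gs.Δ
    · subst hxeq
      exact ⟨[], [gs.Δ], v, 0, q, rfl, by simp, gs.dvd_of_mul_dvd_mul_left hq, by simp⟩
    have hs : gs.BlockState x 1 (gs.complement x) [] 0 q v := by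
      refine ⟨⟨by simpa using gs.complement_dvd_delta hxΔ,
        by simpa using (gs.complement_eq_one_iff hxΔ).not.2 hxeq, .singleton _, ?_⟩, ?_, ?_, ?_⟩
      · intro h
        rw [List.prod_singleton] at h
        exact hx.1 ((gs.complement_eq_delta_iff hxΔ).1
          (gs.dvd_antisymm (gs.complement_dvd_delta hxΔ) h))
      · simp [gs.mul_complement hxΔ]
      · exact gs.dvd_of_mul_dvd_mul_left (a := x)
          (by simpa [← mul_assoc, gs.mul_complement hxΔ] using hq)
      · simp [gs.mul_complement (gs.complement_dvd_delta hxΔ)]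
    rcases hs.blockOutcome hsp hv with ⟨w, rest, k, n, rfl, hw, hn, hkn⟩ | hskip
    · exact ⟨[], x :: w, rest, k, n, rfl, by simpa using hw, hn, by omega⟩
    · obtain ⟨u, D, r, k, n, rfl, hD, hr, hkn⟩ := ih hv (by simpa using hskip)
      exact ⟨x :: u, D, r, k, n, rfl, hD, hr, hkn⟩

end GarsideMonoid

/-- In a Garside monoid of spindle type, if Δ^q left-divides b then every word
    w over the atoms representing b decomposes as w ≡ u₁D₁u₂D₂⋯uₘDₘuₘ₊₁ where
    each Dᵢ represents Δ^{qᵢ} and q₁+⋯+qₘ = q.  The decomposition is encoded by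
    a list `ps` of triples (uᵢ, Dᵢ, qᵢ) together with the final factor uₘ₊₁. -/
theorem stmt_7 {M : Type*} [Monoid M] (gs : GarsideMonoid M)
    (hsp : gs.SpindleType) (b : M) (q : ℕ) (hb : LeftDvd (gs.Δ ^ q) b) :
    ∀ l : List M, (∀ x ∈ l, IsAtomOf M x) → l.prod = b →
      ∃ (ps : List (List M × List M × ℕ)) (u : List M),
        l = (ps.map fun p => p.1 ++ p.2.1).flatten ++ u ∧
        (∀ p ∈ ps, p.2.1.prod = gs.Δ ^ p.2.2) ∧
        (ps.map fun p => p.2.2).sum = q := by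
  rintro l hl rfl
  induction q using Nat.strong_induction_on generalizing l with
  | _ q ih =>
    rcases q with _ | q
    · exact ⟨[], l, by simp, by simp, by simp⟩
    obtain ⟨u, D, r, k, n, rfl, hD, hr, hkn⟩ := hsp.exists_delta_pow_block hl hb
    obtain ⟨ps, u', rfl, hps, hsum⟩ :=
      ih n (by omega) r (fun a ha => hl a (List.mem_append_right _ ha)) hr
    refine ⟨(u, D, k + 1) :: ps, u', by simp, List.forall_mem_cons.2 ⟨hD, hps⟩, ?_⟩
    simp only [List.map_cons, List.sum_cons, hsum]
    omega
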